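/- arXiv:2204.03964 — 3 statements merged into one kernel-verified Lean document; each statement's English description precedes it below -/
import Mathlib

section
/- For m ≥ 2, let F_{2m} be the 3-uniform hypergraph on vertex set {0,...,2m−1} ∪ {a,b} whose 2m triangles are {i, i+1 mod 2m, a} for even i and {i, i+1 mod 2m, b} for odd i. Then every nonempty subset S of the triangles of F_{2m}, with |S| = s, is incident to at least s + 2 vertices. -/
/-- The `i`-th triangle of the absorber `F_{2m}`: vertices are cycle vertices
(left summand, indices `0, ..., 2m-1`) together with two apexes `a = inr 0`
and `b = inr 1`. -/
def Ftri (m i : ℕ) : Finset (ℕ ⊕ Fin 2) :=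
  {Sum.inl i, Sum.inl ((i + 1) % (2 * m)), Sum.inr (if i % 2 = 0 then 0 else 1)}

lemma shift_all (n : ℕ) (hn : 1 < n) (S : Finset ℕ)
    (h : ∀ i ∈ S, (i + 1) % n ∈ S)
    (i0 : ℕ) (h0 : i0 ∈ S) (hi0 : i0 < n) : ∀ k, (i0 + k) % n ∈ S := by
  intro k
  induction k with
  | zero => simpa [Nat.mod_eq_of_lt hi0] using h0
  | succ k ih =>
    have hmod : (i0 + (k + 1)) % n = ((i0 + k) % n + 1) % n := by
      rw [← Nat.add_assoc, Nat.add_mod (i0 + k) 1 n, Nat.mod_eq_of_lt hn]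
    rw [hmod]
    exact h _ ih

/-- Every nonempty set of `s` triangles of `F_{2m}` is incident to at least
`s + 2` vertices. -/
theorem absorber_erdos_configuration (m : ℕ) (hm : 2 ≤ m) (S : Finset ℕ)
    (hS : S.Nonempty) (hSsub : S ⊆ Finset.range (2 * m)) :
    S.card + 2 ≤ (S.biUnion (Ftri m)).card := by
  have hn : 4 ≤ 2 * m := by omega
  have hinl : Function.Injective (Sum.inl : ℕ → ℕ ⊕ Fin 2) := Sum.inl_injective
  by_cases hfull : ∀ i ∈ S, (i + 1) % (2 * m) ∈ S
  · -- S is shift-closed, hence all of range (2m)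
    obtain ⟨i0, hi0⟩ := hS
    have hlt : i0 < 2 * m := Finset.mem_range.mp (hSsub hi0)
    have hSeq : S = Finset.range (2 * m) := by
      apply Finset.Subset.antisymm hSsub
      intro j hj
      have hj' := Finset.mem_range.mp hj
      have := shift_all (2 * m) (by omega) S hfull i0 hi0 hlt (j + 2 * m - i0)
      rwa [show i0 + (j + 2 * m - i0) = j + 2 * m from by omega,
        Nat.add_mod_right, Nat.mod_eq_of_lt hj'] at this
    have h0S : (0 : ℕ) ∈ S := by rw [hSeq]; exact Finset.mem_range.mpr (by omega)
    have h1S : (1 : ℕ) ∈ S := by rw [hSeq]; exact Finset.mem_range.mpr (by omega)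
    have hsub : insert (Sum.inr 0) (insert (Sum.inr 1)
        (S.image (Sum.inl : ℕ → ℕ ⊕ Fin 2))) ⊆ S.biUnion (Ftri m) := by
      intro x hx
      simp only [Finset.mem_insert, Finset.mem_image] at hx
      rcases hx with rfl | rfl | ⟨y, hy, rfl⟩
      · exact Finset.mem_biUnion.mpr ⟨0, h0S, by simp [Ftri]⟩
      · exact Finset.mem_biUnion.mpr ⟨1, h1S, by simp [Ftri]⟩
      · exact Finset.mem_biUnion.mpr ⟨y, hy, by simp [Ftri]⟩
    have hcard : (insert (Sum.inr 0) (insert (Sum.inr 1)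
        (S.image (Sum.inl : ℕ → ℕ ⊕ Fin 2)))).card = S.card + 2 := by
      rw [Finset.card_insert_of_notMem (by simp), Finset.card_insert_of_notMem (by simp),
        Finset.card_image_of_injective _ hinl]
    calc S.card + 2 = _ := hcard.symm
      _ ≤ _ := Finset.card_le_card hsub
  · push_neg at hfull
    obtain ⟨i, hiS, hj⟩ := hfull
    set j := (i + 1) % (2 * m) with hjdef
    set a : Fin 2 := if i % 2 = 0 then 0 else 1 with hadef
    have hsub : insert (Sum.inr a) (insert (Sum.inl j)
        (S.image (Sum.inl : ℕ → ℕ ⊕ Fin 2))) ⊆ S.biUnion (Ftri m) := by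
      intro x hx
      simp only [Finset.mem_insert, Finset.mem_image] at hx
      rcases hx with rfl | rfl | ⟨y, hy, rfl⟩
      · exact Finset.mem_biUnion.mpr ⟨i, hiS, by simp [Ftri, hadef]⟩
      · exact Finset.mem_biUnion.mpr ⟨i, hiS, by simp [Ftri, hjdef]⟩
      · exact Finset.mem_biUnion.mpr ⟨y, hy, by simp [Ftri]⟩
    have hcard : (insert (Sum.inr a) (insert (Sum.inl j)
        (S.image (Sum.inl : ℕ → ℕ ⊕ Fin 2)))).card = S.card + 2 := by
      rw [Finset.card_insert_of_notMem (by simp),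
        Finset.card_insert_of_notMem (by simpa using hj),
        Finset.card_image_of_injective _ hinl]
    calc S.card + 2 = _ := hcard.symm
      _ ≤ _ := Finset.card_le_card hsub
end

section
/- Let G be a bipartite graph with parts X and Y, each of size N. Suppose that for every S ⊆ X and S' ⊆ Y with |S'| < |S| ≤ ⌈N/2⌉ there is at least one edge between S and Y \ S', and for every T' ⊆ X and T ⊆ Y with |T'| < |T| ≤ ⌈N/2⌉ there is at least one edge between T and X \ T'. Then G has a perfect matching. -/
/-- Hall-type criterion: a bipartite graph with parts `X`, `Y` of size `N`
has a perfect matching provided that for every `S ⊆ X`, `S' ⊆ Y` with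
`|S'| < |S| ≤ ⌈N/2⌉` there is an edge from `S` to `Y \ S'`, and symmetrically
for every `T' ⊆ X`, `T ⊆ Y` with `|T'| < |T| ≤ ⌈N/2⌉` there is an edge from
`T` to `X \ T'`. -/
theorem hall_type_perfect_matching {X Y : Type*} [Fintype X] [Fintype Y]
    [DecidableEq X] [DecidableEq Y] (N : ℕ)
    (hX : Fintype.card X = N) (hY : Fintype.card Y = N)
    (E : Finset (X × Y))
    (h1 : ∀ S : Finset X, ∀ S' : Finset Y,
      S'.card < S.card → S.card ≤ (N + 1) / 2 →
      ∃ e ∈ E, e.1 ∈ S ∧ e.2 ∉ S')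
    (h2 : ∀ T' : Finset X, ∀ T : Finset Y,
      T'.card < T.card → T.card ≤ (N + 1) / 2 →
      ∃ e ∈ E, e.2 ∈ T ∧ e.1 ∉ T') :
    ∃ f : X ≃ Y, ∀ x : X, (x, f x) ∈ E := by
  classical
  set t : X → Finset Y := fun x => Finset.univ.filter (fun y => (x, y) ∈ E) with ht
  set s : Y → Finset X := fun y => Finset.univ.filter (fun x => (x, y) ∈ E) with hs
  -- small sets on either side expand
  have keyA : ∀ S : Finset X, S.card ≤ (N + 1) / 2 → S.card ≤ (S.biUnion t).card := by
    intro S hS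
    by_contra hlt
    push_neg at hlt
    obtain ⟨e, heE, heS, heN⟩ := h1 S (S.biUnion t) hlt hS
    exact heN (Finset.mem_biUnion.2 ⟨e.1, heS, by simp [ht, heE]⟩)
  have keyB : ∀ T : Finset Y, T.card ≤ (N + 1) / 2 → T.card ≤ (T.biUnion s).card := by
    intro T hT
    by_contra hlt
    push_neg at hlt
    obtain ⟨e, heE, heT, heN⟩ := h2 (T.biUnion s) T hlt hT
    exact heN (Finset.mem_biUnion.2 ⟨e.2, heT, by simp [hs, heE]⟩)
  -- full Hall condition
  have hall : ∀ S : Finset X, S.card ≤ (S.biUnion t).card := by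
    intro S
    by_cases hS : S.card ≤ (N + 1) / 2
    · exact keyA S hS
    · push_neg at hS
      -- first, the neighborhood of S is large
      obtain ⟨S₀, hS₀sub, hS₀card⟩ := Finset.exists_subset_card_eq (le_of_lt hS)
      have hbig : (N + 1) / 2 ≤ (S.biUnion t).card := by
        calc (N + 1) / 2 = S₀.card := hS₀card.symm
          _ ≤ (S₀.biUnion t).card := keyA S₀ (le_of_eq hS₀card)
          _ ≤ (S.biUnion t).card :=
              Finset.card_le_card (Finset.biUnion_subset_biUnion_of_subset_left t hS₀sub)
      set T : Finset Y := Finset.univ \ S.biUnion t with hTdef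
      have hcardY : (Finset.univ : Finset Y).card = N := by simp [hY]
      have hTcard : T.card = N - (S.biUnion t).card := by
        rw [hTdef, Finset.card_sdiff_of_subset (Finset.subset_univ _), hcardY]
      have hNby : (S.biUnion t).card ≤ N := by
        rw [← hcardY]; exact Finset.card_le_card (Finset.subset_univ _)
      have hTsmall : T.card ≤ (N + 1) / 2 := by omega
      have hTnbr : T.biUnion s ⊆ Finset.univ \ S := by
        intro x hx
        obtain ⟨y, hyT, hxy⟩ := Finset.mem_biUnion.1 hx
        simp only [hs, Finset.mem_filter] at hxy
        refine Finset.mem_sdiff.2 ⟨Finset.mem_univ _, fun hxS => ?_⟩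
        have : y ∈ S.biUnion t := Finset.mem_biUnion.2 ⟨x, hxS, by simp [ht, hxy.2]⟩
        exact (Finset.mem_sdiff.1 hyT).2 this
      have hcardX : (Finset.univ : Finset X).card = N := by simp [hX]
      have hSN : S.card ≤ N := by
        rw [← hcardX]; exact Finset.card_le_card (Finset.subset_univ _)
      have h3 : T.card ≤ N - S.card := by
        calc T.card ≤ (T.biUnion s).card := keyB T hTsmall
          _ ≤ (Finset.univ \ S).card := Finset.card_le_card hTnbr
          _ = N - S.card := by rw [Finset.card_sdiff_of_subset (Finset.subset_univ _), hcardX]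
      omega
  obtain ⟨f, hfinj, hf⟩ := (Finset.all_card_le_biUnion_card_iff_existsInjective' t).1 hall
  have hbij : Function.Bijective f := by
    rw [Fintype.bijective_iff_injective_and_card]
    exact ⟨hfinj, by rw [hX, hY]⟩
  refine ⟨Equiv.ofBijective f hbij, fun x => ?_⟩
  have := hf x
  simp only [ht, Finset.mem_filter] at this
  exact this.2
end

section
/- Let A_1, ..., A_n be events in a probability space such that each A_i is mutually independent of all but at most d of the other events, and P(A_i) ≤ p for all i. If e·p·(d+1) ≤ 1 then P(∩_{i=1}^n A_i^c) > 0. -/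
/-! For `i ∉ S` write `G i S = μ (A i ∩ ⋂ j ∈ S, (A j)ᶜ)` and `F S = μ (⋂ j ∈ S, (A j)ᶜ)`.
By strong induction on `S`, `G i S ≤ x F S` whenever `p ≤ x (1 - x) ^ d`: splitting `S` into the
part inside the independence set `J` of `A i` and the at most `d` indices outside it,
independence gives `G i S ≤ p F (S ∩ J)`, while adding the outside indices one at a time costs
a factor `1 - x` each by the induction hypothesis, so `F S ≥ (1 - x) ^ d F (S ∩ J)`.
The same chaining over all indices gives `F univ ≥ (1 - x) ^ n > 0`. The choice `x = 1 / (d + 2)`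
satisfies `p ≤ x (1 - x) ^ d` because `(1 + 1 / (d + 1)) ^ (d + 1) ≤ e`.
Working with unconditioned measures avoids dividing by probabilities that might vanish. -/

open MeasureTheory ProbabilityTheory

namespace LovaszLocalLemma

open Finset

variable {Ω ι : Type*} {A : ι → Set Ω}

def avoiding (A : ι → Set Ω) (T : Finset ι) : Set Ω := ⋂ j ∈ T, (A j)ᶜ

@[simp] lemma avoiding_empty : avoiding A ∅ = Set.univ := by simp [avoiding]

lemma avoiding_univ [Fintype ι] : avoiding A univ = ⋂ i, (A i)ᶜ := by simp [avoiding]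

lemma avoiding_insert [DecidableEq ι] (j : ι) (T : Finset ι) :
    avoiding A (insert j T) = avoiding A T \ A j := by
  rw [avoiding, avoiding, set_biInter_insert, Set.sdiff_eq, Set.inter_comm]

lemma avoiding_anti {T U : Finset ι} (h : T ⊆ U) : avoiding A U ⊆ avoiding A T :=
  Set.biInter_subset_biInter_left (coe_subset.2 h)

lemma measurableSet_generateFrom_avoiding {T J : Finset ι} (h : T ⊆ J) :
    MeasurableSet[MeasurableSpace.generateFrom {S | ∃ j ∈ J, S = A j}] (avoiding A T) :=
  MeasurableSet.biInter T.countable_toSet fun j hj =>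
    (MeasurableSpace.measurableSet_generateFrom
      (show A j ∈ {S | ∃ j ∈ J, S = A j} from ⟨j, h hj, rfl⟩)).compl

variable [MeasurableSpace Ω] {μ : Measure Ω}

def IndepOfAllBut [Fintype ι] (μ : Measure Ω) (A : ι → Set Ω) (d : ℕ) : Prop :=
  ∀ i, ∃ J : Finset ι, i ∉ J ∧ Fintype.card ι - 1 - d ≤ #J ∧
    Indep (MeasurableSpace.generateFrom {A i})
      (MeasurableSpace.generateFrom {S | ∃ j ∈ J, S = A j}) μ

lemma measureReal_avoiding_insert [DecidableEq ι] [IsFiniteMeasure μ] {j : ι}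
    (hj : MeasurableSet (A j)) (T : Finset ι) :
    μ.real (avoiding A (insert j T)) = μ.real (avoiding A T) - μ.real (A j ∩ avoiding A T) := by
  rw [avoiding_insert, Set.inter_comm]
  linarith [measureReal_inter_add_sdiff (μ := μ) (s := avoiding A T) hj]

lemma measureReal_inter_avoiding_of_indep {i : ι} {J T : Finset ι}
    (hind : Indep (MeasurableSpace.generateFrom {A i})
      (MeasurableSpace.generateFrom {S | ∃ j ∈ J, S = A j}) μ) (hTJ : T ⊆ J) :
    μ.real (A i ∩ avoiding A T) = μ.real (A i) * μ.real (avoiding A T) := by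
  rw [measureReal_def, (Indep_iff _ _ μ).mp hind _ _
    (MeasurableSpace.measurableSet_generateFrom rfl) (measurableSet_generateFrom_avoiding hTJ),
    ENNReal.toReal_mul, measureReal_def, measureReal_def]

lemma card_sdiff_le_of_notMem [Fintype ι] [DecidableEq ι] {i : ι} {S J : Finset ι} {d : ℕ}
    (hiS : i ∉ S) (hiJ : i ∉ J) (hJ : Fintype.card ι - 1 - d ≤ #J) : #(S \ J) ≤ d := by
  have hS : S \ J ⊆ univ.erase i \ J :=
    sdiff_subset_sdiff (subset_erase.2 ⟨subset_univ S, hiS⟩) le_rfl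
  have hJ' : J ⊆ univ.erase i := subset_erase.2 ⟨subset_univ J, hiJ⟩
  have := card_le_card hS
  rw [card_sdiff_of_subset hJ', card_erase_of_mem (mem_univ i), card_univ] at this
  omega

lemma pow_mul_measureReal_avoiding_le [DecidableEq ι] [IsFiniteMeasure μ]
    (hA : ∀ i, MeasurableSet (A i)) {x : ℝ} (hx : x ≤ 1) {T R : Finset ι} (hTR : Disjoint T R)
    (hstep : ∀ U ⊂ T ∪ R, ∀ j ∉ U, μ.real (A j ∩ avoiding A U) ≤ x * μ.real (avoiding A U)) :
    (1 - x) ^ #R * μ.real (avoiding A T) ≤ μ.real (avoiding A (T ∪ R)) := by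
  induction R using Finset.induction_on with
  | empty => simp
  | insert j R hjR ih =>
    have hjT : j ∉ T := fun hjT => disjoint_left.1 hTR hjT (mem_insert_self j R)
    have hjTR : j ∉ T ∪ R := by simp [hjT, hjR]
    rw [union_insert] at hstep ⊢
    have hR := ih (hTR.mono_right (subset_insert j R))
      fun U hU => hstep U (hU.trans_subset (subset_insert j _))
    have hj := hstep _ (ssubset_insert hjTR) j hjTR
    rw [card_insert_of_notMem hjR, measureReal_avoiding_insert (hA j)]
    calc (1 - x) ^ (#R + 1) * μ.real (avoiding A T)
        = (1 - x) * ((1 - x) ^ #R * μ.real (avoiding A T)) := by ring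
      _ ≤ (1 - x) * μ.real (avoiding A (T ∪ R)) := by gcongr
      _ ≤ _ := by linarith

theorem measureReal_inter_avoiding_le [Fintype ι] [DecidableEq ι] [IsFiniteMeasure μ]
    (hA : ∀ i, MeasurableSet (A i)) {p x : ℝ} {d : ℕ} (hp : ∀ i, μ.real (A i) ≤ p)
    (hindep : IndepOfAllBut μ A d)
    (hx0 : 0 ≤ x) (hx1 : x ≤ 1) (hpx : p ≤ x * (1 - x) ^ d) (S : Finset ι) :
    ∀ i ∉ S, μ.real (A i ∩ avoiding A S) ≤ x * μ.real (avoiding A S) := by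
  induction S using Finset.strongInduction with
  | H S ih =>
    intro i hiS
    obtain ⟨J, hiJ, hJ, hind⟩ := hindep i
    have hS : S ∩ J ∪ S \ J = S := sup_inf_sdiff S J
    have hchain : (1 - x) ^ #(S \ J) * μ.real (avoiding A (S ∩ J)) ≤ μ.real (avoiding A S) := by
      simpa only [hS] using pow_mul_measureReal_avoiding_le hA hx1
        (disjoint_sdiff_inter S J).symm fun U hU => ih U (hS ▸ hU)
    calc μ.real (A i ∩ avoiding A S)
        ≤ μ.real (A i ∩ avoiding A (S ∩ J)) :=
          measureReal_mono (Set.inter_subset_inter_right _ (avoiding_anti inter_subset_left))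
      _ = μ.real (A i) * μ.real (avoiding A (S ∩ J)) :=
          measureReal_inter_avoiding_of_indep hind inter_subset_right
      _ ≤ x * (1 - x) ^ #(S \ J) * μ.real (avoiding A (S ∩ J)) := by
          gcongr
          calc μ.real (A i) ≤ x * (1 - x) ^ d := (hp i).trans hpx
            _ ≤ x * (1 - x) ^ #(S \ J) := mul_le_mul_of_nonneg_left (pow_le_pow_of_le_one
                (by linarith) (by linarith) (card_sdiff_le_of_notMem hiS hiJ hJ)) hx0
      _ ≤ x * μ.real (avoiding A S) := by
          rw [mul_assoc]
          gcongr

lemma le_inv_mul_one_sub_inv_pow_of_exp_mul_le {p : ℝ} {d : ℕ}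
    (h : Real.exp 1 * p * (d + 1) ≤ 1) :
    p ≤ ((d : ℝ) + 2)⁻¹ * (1 - ((d : ℝ) + 2)⁻¹) ^ d := by
  set y : ℝ := 1 + ((d : ℝ) + 1)⁻¹
  have hy0 : 0 < y := by positivity
  have hy : y ^ (d + 1) ≤ Real.exp 1 := by
    simpa [y] using Real.one_add_inv_pow_le_exp (n := d + 1)
  have hid : ((d : ℝ) + 2)⁻¹ * (1 - ((d : ℝ) + 2)⁻¹) ^ d = 1 / (y ^ (d + 1) * (d + 1)) := by
    have h1 : 1 - ((d : ℝ) + 2)⁻¹ = y⁻¹ := by simp only [y]; field_simp; ring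
    have h2 : ((d : ℝ) + 2)⁻¹ = y⁻¹ * ((d : ℝ) + 1)⁻¹ := by simp only [y]; field_simp; ring
    rw [h1, h2, inv_pow, pow_succ]
    field_simp
  calc p ≤ 1 / (Real.exp 1 * (d + 1)) := by rw [le_div_iff₀ (by positivity)]; linarith
    _ ≤ _ := by rw [hid]; gcongr

theorem pow_le_measureReal_avoiding_univ [Fintype ι] [DecidableEq ι] [IsProbabilityMeasure μ]
    (hA : ∀ i, MeasurableSet (A i)) {p x : ℝ} {d : ℕ} (hp : ∀ i, μ.real (A i) ≤ p)
    (hindep : IndepOfAllBut μ A d)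
    (hx0 : 0 ≤ x) (hx1 : x ≤ 1) (hpx : p ≤ x * (1 - x) ^ d) :
    (1 - x) ^ Fintype.card ι ≤ μ.real (avoiding A univ) := by
  simpa using pow_mul_measureReal_avoiding_le (T := ∅) (R := univ) hA hx1 (disjoint_empty_left _)
    fun U _ => measureReal_inter_avoiding_le hA hp hindep hx0 hx1 hpx U

end LovaszLocalLemma

open LovaszLocalLemma

/-- Symmetric Lovász Local Lemma: if each event `A i` has probability at most
`p`, each `A i` is mutually independent of all but at most `d` of the other
events (i.e. independent of the σ-algebra generated by the events indexed by a
set of at least `n - 1 - d` other indices), and `e·p·(d+1) ≤ 1`, then with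
positive probability none of the events occur. -/
theorem lovasz_local_lemma {Ω : Type*} [MeasurableSpace Ω] (μ : Measure Ω)
    [IsProbabilityMeasure μ] (n d : ℕ) (A : Fin n → Set Ω)
    (hmeas : ∀ i, MeasurableSet (A i)) (p : ℝ)
    (hp : ∀ i, (μ (A i)).toReal ≤ p)
    (hindep : ∀ i : Fin n, ∃ J : Finset (Fin n), i ∉ J ∧ n - 1 - d ≤ J.card ∧
      Indep (MeasurableSpace.generateFrom {A i})
        (MeasurableSpace.generateFrom {S : Set Ω | ∃ j ∈ J, S = A j}) μ)
    (hbound : Real.exp 1 * p * (d + 1) ≤ 1) :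
    0 < μ (⋂ i, (A i)ᶜ) := by
  set x : ℝ := ((d : ℝ) + 2)⁻¹
  have hx0 : 0 ≤ x := by positivity
  have hx1 : x < 1 := inv_lt_one_of_one_lt₀ (by linarith [(d.cast_nonneg : (0 : ℝ) ≤ d)])
  have hlow := pow_le_measureReal_avoiding_univ hmeas hp
    (fun i => by simpa only [Fintype.card_fin] using hindep i)
    hx0 hx1.le (le_inv_mul_one_sub_inv_pow_of_exp_mul_le hbound)
  rw [Fintype.card_fin, avoiding_univ] at hlow
  exact (ENNReal.toReal_pos_iff.mp ((pow_pos (sub_pos.2 hx1) n).trans_le hlow)).1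
end
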